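/- Let k ≥ 2, and set φ_0(x) = (−1)^m/(2k−1)^m if |x| = 2m is even, and φ_0(x) = 0 if |x| is odd. Then φ_0 ∈ ℓ^p(F_k) for every p > 2, and χ_1 ∗ φ_0 = 0, i.e., ∑_{y ∈ E_1} φ_0(xy) = 0 for all x ∈ F_k. -/

import Mathlib

/-- The sphere of radius `n` about the identity in the free group `F_k`:
the finite set of elements of reduced word length `n`. -/
noncomputable def sphere (k n : ℕ) : Finset (FreeGroup (Fin k)) :=
  (Set.Finite.preimage (Function.Injective.injOn FreeGroup.toWord_injective)
    (List.finite_length_eq ((Fin k) × Bool) n)).toFinset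

/-- `χ_n = ∑_{|x| = n} x`, the sum of the sphere of radius `n` in `ℂ[F_k]`. -/
noncomputable def chi (k n : ℕ) : MonoidAlgebra ℂ (FreeGroup (Fin k)) :=
  ∑ x ∈ sphere k n, MonoidAlgebra.of ℂ (FreeGroup (Fin k)) x

/-- The polynomials `p_0 = 1`, `p_1 = z`, `p_2 = z² - 2k`,
`p_{n+1} = z p_n - (2k-1) p_{n-1}` for `n ≥ 2`. -/
noncomputable def p (k : ℕ) : ℕ → Polynomial ℂ
  | 0 => 1
  | 1 => Polynomial.X
  | 2 => Polynomial.X ^ 2 - Polynomial.C ((2 * k : ℕ) : ℂ)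
  | (n + 3) => Polynomial.X * p k (n + 2) - Polynomial.C ((2 * k - 1 : ℕ) : ℂ) * p k (n + 1)

/-- `e_0 = 1` and `e_n = 2k(2k-1)^{n-1}` for `n ≥ 1`, the cardinality of the sphere. -/
def eN (k n : ℕ) : ℕ := if n = 0 then 1 else 2 * k * (2 * k - 1) ^ (n - 1)

/-- `φ_0(x) = (-1)^m/(2k-1)^m` if `|x| = 2m`, and `0` if `|x|` is odd. -/
noncomputable def phizero (k : ℕ) : FreeGroup (Fin k) → ℂ := fun x =>
  if Even x.toWord.length then
    (-1 : ℂ) ^ (x.toWord.length / 2) / ((2 * k - 1 : ℕ) : ℂ) ^ (x.toWord.length / 2)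
  else 0

/-!
Right multiplication by a generator either cancels the last letter of the reduced word of `x`
(for exactly one generator when `x ≠ 1`) or appends it. Hence a radial function `u (|x|)`
satisfies `∑_{|y| = 1} u (|x y|) = u (|x| - 1) + (2k - 1) u (|x| + 1)`, which vanishes for
`u (2m) = (-1/(2k-1))^m` and `u (2m+1) = 0`. For summability, the sphere of radius `n` has at most
`2k (2k-1)^n` elements and `|φ_0| ≤ (2k-1)^(-n/2)` on it, so `∑ |φ_0|^q` is dominated by the
geometric series with ratio `(2k-1)^(1 - q/2) < 1`.
-/

namespace FreeGroup

variable {α : Type*} [DecidableEq α]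

theorem toWord_mul_mk_singleton {x : FreeGroup α} {L : List (α × Bool)} {c : α × Bool}
    (hx : x.toWord = L ++ [c]) (a : α × Bool) :
    (x * mk [a]).toWord = if a = (c.1, !c.2) then L else x.toWord ++ [a] := by
  have hL : IsReduced L := isReduced_toWord.infix ⟨[], [c], by rw [hx]; rfl⟩
  rw [← mk_toWord (x := x), mul_mk, toWord_mk, mk_toWord]
  split_ifs with ha
  · rw [hx, ha, List.append_assoc, List.singleton_append,
      reduce.Step.eq (L₂ := L ++ []) Red.Step.not, List.append_nil, hL.reduce_eq]
  · refine IsReduced.reduce_eq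
      (List.isChain_append.mpr ⟨isReduced_toWord, IsReduced.singleton, ?_⟩)
    simp only [hx, List.getLast?_append, List.getLast?_singleton, Option.some_or,
      Option.mem_def, Option.some.injEq, List.head?_cons, forall_eq']
    exact fun h1 => by_contra fun h2 => ha (Prod.ext h1.symm (Bool.eq_not.mpr (Ne.symm h2)))

theorem length_toWord_mul_mk_singleton {x : FreeGroup α} {L : List (α × Bool)}
    {c : α × Bool} (hx : x.toWord = L ++ [c]) (a : α × Bool) :
    (x * mk [a]).toWord.length = if a = (c.1, !c.2) then L.length else L.length + 2 := by
  rw [toWord_mul_mk_singleton hx]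
  split_ifs <;> simp [hx]

theorem exists_toWord_eq_append_singleton {x : FreeGroup α} (hx : x ≠ 1) :
    ∃ L c, x.toWord = L ++ [c] := by
  obtain h | h := List.eq_nil_or_concat x.toWord
  · exact absurd (toWord_eq_nil_iff.mp h) hx
  · simpa using h

theorem mk_singleton_injective : Function.Injective fun a : α × Bool => mk [a] := fun a b h => by
  simpa [toWord_mk, reduce_singleton] using congrArg toWord h

end FreeGroup

open FreeGroup Finset

theorem mem_sphere {k n : ℕ} {x : FreeGroup (Fin k)} : x ∈ sphere k n ↔ x.toWord.length = n := by
  simp [sphere]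

theorem sphere_one (k : ℕ) : sphere k 1 = univ.map ⟨fun a => mk [a], mk_singleton_injective⟩ := by
  ext x
  simp only [mem_sphere, List.length_eq_one_iff, mem_map, mem_univ, true_and,
    Function.Embedding.coeFn_mk]
  constructor
  · rintro ⟨a, ha⟩
    exact ⟨a, by rw [← ha, mk_toWord]⟩
  · rintro ⟨a, rfl⟩
    exact ⟨a, by rw [toWord_mk, reduce_singleton]⟩

theorem card_sphere_one (k : ℕ) : #(sphere k 1) = 2 * k := by
  simp [sphere_one, mul_comm]

theorem sum_sphere_one_length_toWord_mul {M : Type*} [AddCommMonoid M] {k : ℕ} (u : ℕ → M)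
    {x : FreeGroup (Fin k)} {L : List (Fin k × Bool)} {c : Fin k × Bool}
    (hx : x.toWord = L ++ [c]) :
    ∑ y ∈ sphere k 1, u (x * y).toWord.length = u L.length + (2 * k - 1) • u (L.length + 2) := by
  simp only [sphere_one, sum_map, Function.Embedding.coeFn_mk,
    length_toWord_mul_mk_singleton hx, apply_ite u, sum_ite, sum_const, filter_eq', filter_ne',
    mem_univ, if_true, card_singleton, one_smul, card_erase_of_mem]
  simp [mul_comm]

theorem sum_sphere_one_phizero_mul (k : ℕ) (x : FreeGroup (Fin k)) :
    ∑ y ∈ sphere k 1, phizero k (x * y) = 0 := by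
  obtain rfl | hx := eq_or_ne x 1
  · refine sum_eq_zero fun y hy => ?_
    simp [phizero, one_mul, mem_sphere.mp hy]
  obtain ⟨L, c, hL⟩ := exists_toWord_eq_append_singleton hx
  unfold phizero
  rw [sum_sphere_one_length_toWord_mul (fun n => if Even n then
    (-1 : ℂ) ^ (n / 2) / ((2 * k - 1 : ℕ) : ℂ) ^ (n / 2) else 0) hL]
  obtain ⟨m, hm⟩ | ⟨m, hm⟩ := L.length.even_or_odd
  · have hb : ((2 * k - 1 : ℕ) : ℂ) ≠ 0 := by
      have := c.1.pos
      exact_mod_cast (by omega : 2 * k - 1 ≠ 0)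
    have hm1 : (L.length + 2) / 2 = m + 1 := by omega
    have hm2 : L.length / 2 = m := by omega
    simp only [hm1, hm2, nsmul_eq_mul, show Even L.length from ⟨m, hm⟩,
      show Even (L.length + 2) from ⟨m + 1, by omega⟩, if_true]
    field_simp
    ring
  · simp [hm, parity_simps]

theorem card_sphere_add_two_le (k n : ℕ) :
    #(sphere k (n + 2)) ≤ (2 * k - 1) * #(sphere k (n + 1)) := by
  let extend (v : FreeGroup (Fin k)) : Finset (FreeGroup (Fin k)) :=
    ({a | (v * mk [a]).toWord.length = n + 2} : Finset _).image (v * mk [·])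
  have hsub : sphere k (n + 2) ⊆ (sphere k (n + 1)).biUnion extend := by
    intro w hw
    have hw' := mem_sphere.mp hw
    obtain ⟨L, c, hL⟩ := exists_toWord_eq_append_singleton (x := w)
      (by rintro rfl; simp at hw')
    have hLred : (mk L).toWord = L := by
      rw [toWord_mk]
      exact (isReduced_toWord.infix ⟨[], [c], by rw [hL]; rfl⟩).reduce_eq
    have hmul : mk L * mk [c] = w := by rw [mul_mk, ← hL, mk_toWord]
    refine mem_biUnion.mpr ⟨mk L, mem_sphere.mpr ?_, mem_image.mpr ⟨c, ?_, hmul⟩⟩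
    · simpa [hLred, hL] using hw'
    · simpa only [mem_filter, mem_univ, true_and, hmul] using hw'
  refine (card_le_card hsub).trans ((card_biUnion_le_card_mul _ _ _ fun v hv => ?_).trans_eq
    (mul_comm _ _))
  have hv' := mem_sphere.mp hv
  obtain ⟨L, c, hL⟩ := exists_toWord_eq_append_singleton (x := v) (by rintro rfl; simp at hv')
  have hfilter :
      ({a | (v * mk [a]).toWord.length = n + 2} : Finset _) ⊆ univ.erase (c.1, !c.2) := by
    intro a ha
    simp only [mem_filter, mem_univ, true_and, length_toWord_mul_mk_singleton hL] at ha
    simp only [mem_erase, mem_univ, and_true]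
    rintro rfl
    simp [hL] at hv' ha
    omega
  refine card_image_le.trans ((card_le_card hfilter).trans ?_)
  simp [card_erase_of_mem, mul_comm]

theorem card_sphere_le {k : ℕ} (hk : 1 ≤ k) : ∀ n, #(sphere k n) ≤ 2 * k * (2 * k - 1) ^ n
  | 0 => by
    have : sphere k 0 ⊆ {1} := fun x hx => by simpa using mem_sphere.mp hx
    exact (card_le_card this).trans (by rw [card_singleton, pow_zero]; omega)
  | 1 => by
    rw [card_sphere_one, pow_one]
    exact Nat.le_mul_of_pos_right _ (by omega)
  | n + 2 => calc
    #(sphere k (n + 2)) ≤ (2 * k - 1) * #(sphere k (n + 1)) := card_sphere_add_two_le k n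
    _ ≤ (2 * k - 1) * (2 * k * (2 * k - 1) ^ (n + 1)) := by gcongr; exact card_sphere_le hk _
    _ = 2 * k * (2 * k - 1) ^ (n + 2) := by ring

theorem summable_comp_length_toWord {k : ℕ} {u : ℕ → ℝ} (hu : 0 ≤ u)
    (h : Summable fun n => #(sphere k n) * u n) :
    Summable fun x : FreeGroup (Fin k) => u x.toWord.length := by
  rw [summable_partition (f := fun x : FreeGroup (Fin k) => u x.toWord.length) (fun x => hu _)
    (s := fun n => (sphere k n : Set _)) (fun x => ⟨x.toWord.length, by simp [mem_sphere]⟩)]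
  refine ⟨fun n => (sphere k n).finite_toSet.summable (fun x => u x.toWord.length),
    h.congr fun n => ?_⟩
  rw [Finset.tsum_subtype' (sphere k n) (fun x => u x.toWord.length),
    sum_congr rfl fun x hx => by rw [mem_sphere.mp hx], sum_const, nsmul_eq_mul]

theorem summable_pow_length_toWord {k : ℕ} (hk : 1 ≤ k) {t : ℝ} (ht : 0 ≤ t)
    (h : ((2 * k - 1 : ℕ) : ℝ) * t < 1) :
    Summable fun x : FreeGroup (Fin k) => t ^ x.toWord.length := by
  refine summable_comp_length_toWord (fun n => pow_nonneg ht n) ?_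
  refine .of_nonneg_of_le (fun n => by positivity) (fun n => ?_)
    ((summable_geometric_of_lt_one (by positivity) h).mul_left (2 * k : ℝ))
  rw [mul_pow, ← mul_assoc]
  gcongr
  exact_mod_cast card_sphere_le hk n

theorem norm_phizero_le (k : ℕ) (x : FreeGroup (Fin k)) :
    ‖phizero k x‖ ≤ (√((2 * k - 1 : ℕ) : ℝ))⁻¹ ^ x.toWord.length := by
  unfold phizero
  split_ifs with h
  · obtain ⟨m, hm⟩ := h
    rw [hm, ← two_mul, Nat.mul_div_cancel_left m two_pos, pow_mul, inv_pow,
      Real.sq_sqrt (Nat.cast_nonneg _)]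
    simp
  · simp

theorem summable_norm_phizero_rpow {k : ℕ} (hk : 2 ≤ k) {q : ℝ} (hq : 2 < q) :
    Summable fun x : FreeGroup (Fin k) => ‖phizero k x‖ ^ q := by
  set s := √((2 * k - 1 : ℕ) : ℝ) with hs
  have hs1 : 1 < s := by
    rw [hs, Real.lt_sqrt zero_le_one, one_pow]
    exact_mod_cast (by omega : 1 < 2 * k - 1)
  have hs0 : 0 < s := one_pos.trans hs1
  have hgrowth : ((2 * k - 1 : ℕ) : ℝ) * s⁻¹ ^ q < 1 := by
    rw [Real.inv_rpow hs0.le, ← div_eq_mul_inv, ← Real.sq_sqrt (Nat.cast_nonneg (2 * k - 1)),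
      ← hs, ← Real.rpow_natCast, ← Real.rpow_sub hs0]
    exact Real.rpow_lt_one_of_one_lt_of_neg hs1 (by push_cast; linarith)
  refine .of_nonneg_of_le (fun x => by positivity) (fun x => ?_)
    (summable_pow_length_toWord (by omega) (by positivity) hgrowth)
  rw [Real.rpow_pow_comm (inv_nonneg.mpr hs0.le)]
  exact Real.rpow_le_rpow (norm_nonneg _) (norm_phizero_le k x) (by linarith)

/-- `φ_0 ∈ ℓ^p(F_k)` for every `p > 2`, and `χ_1 ∗ φ_0 = 0`,
i.e. `∑_{y ∈ E_1} φ_0(xy) = 0` for all `x`. -/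
theorem stmt14 (k : ℕ) (hk : 2 ≤ k) :
    (∀ q : ℝ, 2 < q →
      Summable (fun x : FreeGroup (Fin k) => ‖phizero k x‖ ^ q)) ∧
    (∀ x : FreeGroup (Fin k), ∑ y ∈ sphere k 1, phizero k (x * y) = 0) :=
  ⟨fun _ hq => summable_norm_phizero_rpow hk hq, sum_sphere_one_phizero_mul k⟩
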